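/- arXiv:1511.06031 — 5 statements merged into one kernel-verified Lean document; each statement's English description precedes it below -/
import Mathlib

section
/- Let m > 4 be an integer such that there exists an integer n with m dividing n² + 1. Then 4 divides the Euler totient φ(m). -/
/-! Since `n² ≡ -1 (mod m)` and `-1 ≢ 1` for `m > 2`, the residue of `n` is a unit of order `4`
in `(ℤ/mℤ)ˣ`, a group of order `φ(m)`. -/

theorem orderOf_eq_four_of_sq_eq_neg_one {R : Type*} [Ring R] (hR : (-1 : R) ≠ 1) {x : R}
    (hx : x ^ 2 = -1) : orderOf x = 4 :=
  orderOf_eq_prime_pow (p := 2) (n := 1) (by simpa [hx] using hR)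
    (by rw [show 2 ^ (1 + 1) = 2 * 2 by rfl, pow_mul, hx, neg_one_sq])

theorem four_dvd_card_units_of_sq_eq_neg_one {R : Type*} [Ring R] [Fintype Rˣ]
    (hR : (-1 : R) ≠ 1) {x : R} (hx : x ^ 2 = -1) : 4 ∣ Fintype.card Rˣ := by
  let u : Rˣ := ⟨x, -x, by rw [mul_neg, ← sq, hx, neg_neg], by rw [neg_mul, ← sq, hx, neg_neg]⟩
  have hu : orderOf u = 4 := by
    rw [← orderOf_units]
    exact orderOf_eq_four_of_sq_eq_neg_one hR hx
  exact hu ▸ orderOf_dvd_card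

theorem four_dvd_totient_of_sq_eq_neg_one {m : ℕ} (hm : 2 < m) {x : ZMod m}
    (hx : x ^ 2 = -1) : 4 ∣ Nat.totient m := by
  have : NeZero m := ⟨by omega⟩
  have : Fact (2 < m) := ⟨hm⟩
  rw [← ZMod.card_units_eq_totient]
  exact four_dvd_card_units_of_sq_eq_neg_one ZMod.neg_one_ne_one hx

theorem stmt_6 (m : ℕ) (hm : 4 < m) (h : ∃ n : ℤ, (m : ℤ) ∣ n ^ 2 + 1) :
    4 ∣ Nat.totient m := by
  obtain ⟨n, hn⟩ := h
  have hsq : (n : ZMod m) ^ 2 + 1 = 0 := by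
    exact_mod_cast (ZMod.intCast_zmod_eq_zero_iff_dvd _ _).mpr hn
  exact four_dvd_totient_of_sq_eq_neg_one (by omega) (eq_neg_of_add_eq_zero_left hsq)
end

section
/- Let m > 4 be an integer such that there exists an integer n with m dividing n² + n + 1. Then 6 divides the Euler totient φ(m). -/
/-!
A root `u` of `X² + X + 1` modulo `m` satisfies `u³ = 1`, and `u ≠ 1` as soon as `m ∤ 3`, so it is a
unit of order exactly `3` in `(ZMod m)ˣ`, a group of order `φ m`. Together with the evenness of
`φ m` for `m > 2` this gives `6 ∣ φ m`.
-/

open Nat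

theorem orderOf_eq_three_of_sq_add_self_add_one_eq_zero {R : Type*} [CommRing R] {u : R}
    (hu : u ^ 2 + u + 1 = 0) (h3 : (3 : R) ≠ 0) : orderOf u = 3 := by
  have hu3 : u ^ 3 = 1 := by linear_combination (u - 1) * hu
  have hu1 : u ≠ 1 := by
    rintro rfl
    exact h3 (by linear_combination hu)
  exact orderOf_eq_prime hu3 hu1

theorem ZMod.orderOf_dvd_totient {n : ℕ} {u : ZMod n} (hu : IsUnit u) : orderOf u ∣ φ n := by
  rcases eq_or_ne n 0 with rfl | hn
  · simp
  have : NeZero n := ⟨hn⟩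
  rw [← hu.unit_spec, orderOf_units]
  exact orderOf_dvd_of_pow_eq_one (ZMod.pow_totient _)

theorem three_dvd_totient_of_dvd_sq_add_self_add_one {m : ℕ} {n : ℤ} (hm : ¬m ∣ 3)
    (h : (m : ℤ) ∣ n ^ 2 + n + 1) : 3 ∣ φ m := by
  have hu : (n : ZMod m) ^ 2 + n + 1 = 0 := by
    exact_mod_cast (ZMod.intCast_zmod_eq_zero_iff_dvd _ m).2 h
  have h3 : (3 : ZMod m) ≠ 0 := by
    exact_mod_cast mt (ZMod.natCast_eq_zero_iff 3 m).1 hm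
  have hord := orderOf_eq_three_of_sq_add_self_add_one_eq_zero hu h3
  have hunit : IsUnit (n : ZMod m) := (orderOf_pos_iff.1 (by omega)).isUnit
  exact hord ▸ ZMod.orderOf_dvd_totient hunit

theorem stmt_7 (m : ℕ) (hm : 4 < m) (h : ∃ n : ℤ, (m : ℤ) ∣ n ^ 2 + n + 1) :
    6 ∣ Nat.totient m := by
  obtain ⟨n, hn⟩ := h
  have h2 : 2 ∣ φ m := (totient_even (by omega)).two_dvd
  have hm3 : ¬m ∣ 3 := fun hdvd => by have := le_of_dvd (by norm_num) hdvd; omega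
  have h3 : 3 ∣ φ m := three_dvd_totient_of_dvd_sq_add_self_add_one hm3 hn
  exact (by norm_num : Coprime 2 3).mul_dvd_of_dvd_of_dvd h2 h3
end

section
/- Let m > 2 be an integer, and let m | n² + 1 hold for integers n, with a = (x + y·i)/m an element of ℂ (x, y ∈ ℤ) such that x ≡ n·y (mod m) and gcd(y, m) = 1. Then the additive subgroup of ℂ generated by a, 1, and i equals the additive subgroup generated by (n + i)/m, 1, and i. -/
/-!
Put `b = (n + i)/m` and `L = ℤ + ℤ i`. Since `x ≡ n y (mod m)`,
`a - y b = (x - n y)/m ∈ ℤ`, and `m b = n + i ∈ L`. As `y` is invertible modulo `m`,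
`b` is recovered from `a` modulo `L`, so `a` and `b` generate the same group together with `L`.
-/

open Complex

namespace AddSubgroup

theorem closure_insert_eq_closure_insert_of_isCoprime {G : Type*} [AddCommGroup G] {s : Set G}
    {a b : G} {y m : ℤ} (hab : a - y • b ∈ closure s) (hb : m • b ∈ closure s)
    (hym : IsCoprime y m) : closure (insert a s) = closure (insert b s) := by
  have hs_le {c : G} : closure s ≤ closure (insert c s) := closure_mono (Set.subset_insert c s)
  have hc_mem {c : G} : c ∈ closure (insert c s) := subset_closure (Set.mem_insert c s)
  apply le_antisymm <;> rw [closure_le, Set.insert_subset_iff] <;>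
    refine ⟨?_, subset_closure.trans (closure_mono (Set.subset_insert _ s))⟩
  · have hab' : a = (a - y • b) + y • b := by abel
    rw [hab']
    exact add_mem (hs_le hab) (zsmul_mem hc_mem y)
  · obtain ⟨u, v, huv⟩ := hym
    have hb' : b = u • a - u • (a - y • b) + v • (m • b) :=
      calc b = (u * y + v * m) • b := by rw [huv, one_smul]
        _ = u • a - u • (a - y • b) + v • (m • b) := by
          rw [add_smul, mul_smul, mul_smul, smul_sub]; abel
    rw [hb']
    exact add_mem (sub_mem (zsmul_mem hc_mem u) (zsmul_mem (hs_le hab) u))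
      (zsmul_mem (hs_le hb) v)

end AddSubgroup

theorem stmt_11_general (m n x y : ℤ) (hm : 2 < m)
    (hxy : m ∣ x - n * y) (hgcd : Int.gcd y m = 1) (a : ℂ)
    (ha : a = ((x : ℂ) + (y : ℂ) * I) / (m : ℂ)) :
    AddSubgroup.closure ({a, 1, I} : Set ℂ) =
      AddSubgroup.closure ({((n : ℂ) + I) / (m : ℂ), 1, I} : Set ℂ) := by
  have hm0 : (m : ℂ) ≠ 0 := Int.cast_ne_zero.mpr (by omega)
  have h1 : (1 : ℂ) ∈ AddSubgroup.closure ({1, I} : Set ℂ) :=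
    AddSubgroup.subset_closure (by simp)
  have hI : I ∈ AddSubgroup.closure ({1, I} : Set ℂ) := AddSubgroup.subset_closure (by simp)
  obtain ⟨k, hk⟩ := hxy
  refine AddSubgroup.closure_insert_eq_closure_insert_of_isCoprime (y := y) (m := m) ?_ ?_
    (Int.isCoprime_iff_gcd_eq_one.mpr hgcd)
  · have hdiff : a - y • (((n : ℂ) + I) / m) = k • (1 : ℂ) := by
      have hk' : (x : ℂ) - n * y = m * k := mod_cast hk
      rw [ha, zsmul_eq_mul, zsmul_eq_mul, mul_one, mul_div_assoc', div_sub_div_same,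
        div_eq_iff hm0]
      linear_combination hk'
    exact hdiff ▸ zsmul_mem h1 k
  · have hmb : m • (((n : ℂ) + I) / m) = n • (1 : ℂ) + I := by
      rw [zsmul_eq_mul, zsmul_eq_mul, mul_one, mul_div_cancel₀ _ hm0]
    exact hmb ▸ add_mem (zsmul_mem h1 n) hI

theorem stmt_11 (m n x y : ℤ) (hm : 2 < m) (h : m ∣ n ^ 2 + 1)
    (hxy : m ∣ x - n * y) (hgcd : Int.gcd y m = 1) (a : ℂ)
    (ha : a = ((x : ℂ) + (y : ℂ) * I) / (m : ℂ)) :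
    AddSubgroup.closure ({a, 1, I} : Set ℂ) =
      AddSubgroup.closure ({((n : ℂ) + I) / (m : ℂ), 1, I} : Set ℂ) :=
  stmt_11_general m n x y hm hxy hgcd a ha
end

section
/- In the elliptic curve ℂ/(ℤ + ℤ·i), suppose a is represented by (x + y·i)/m ∈ ℂ with integers x, y, m > 2, that a has order exactly m in ℂ/(ℤ + ℤ·i), and that i·a = n·a in ℂ/(ℤ + ℤ·i) for an integer n (i.e., i·(x + y·i)/m − n·(x + y·i)/m ∈ ℤ + ℤ·i). Then gcd(y, m) = 1 and m divides n² + 1. -/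
/-!
Write `a = (x + y i)/m`. Multiplication by `i` sends `x + y i` to `-y + x i`, so `i a = n a` in
`ℂ/(ℤ + ℤ i)` says `x ≡ n y` and `y ≡ -n x (mod m)`. Any common divisor `d` of `y` and `m` then
divides `x` too, so `(m/d) • a = 0`; since `a` has order exactly `m`, `d = 1`. Finally
`y (n² + 1) = (y + n x) - n (x - n y) ≡ 0 (mod m)`, and `y` is a unit mod `m`.
-/

open Complex

theorem mem_closure_one_I_iff {z : ℂ} :
    z ∈ AddSubgroup.closure ({1, I} : Set ℂ) ↔ ∃ p q : ℤ, (p : ℂ) + q * I = z := by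
  simp only [AddSubgroup.mem_closure_pair, zsmul_eq_mul, mul_one]

theorem intCast_add_intCast_mul_I_inj {p q p' q' : ℤ} :
    (p : ℂ) + q * I = p' + q' * I ↔ p = p' ∧ q = q' := by
  simp [Complex.ext_iff]

theorem div_mem_closure_one_I_iff {m : ℤ} (hm : m ≠ 0) (A B : ℤ) :
    ((A : ℂ) + B * I) / m ∈ AddSubgroup.closure ({1, I} : Set ℂ) ↔ m ∣ A ∧ m ∣ B := by
  have hmC : (m : ℂ) ≠ 0 := by exact_mod_cast hm
  rw [mem_closure_one_I_iff]
  constructor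
  · rintro ⟨p, q, h⟩
    rw [eq_div_iff hmC, show ((p : ℂ) + q * I) * m = ((m * p : ℤ) : ℂ) + (m * q : ℤ) * I by
      push_cast; ring, intCast_add_intCast_mul_I_inj] at h
    exact ⟨⟨p, h.1.symm⟩, ⟨q, h.2.symm⟩⟩
  · rintro ⟨⟨p, rfl⟩, ⟨q, rfl⟩⟩
    exact ⟨p, q, by field_simp; push_cast; ring⟩

section

variable {m x y : ℤ}

theorem zsmul_div_mem_closure_one_I_iff (hm : m ≠ 0) (k : ℤ) :
    k • (((x : ℂ) + y * I) / m) ∈ AddSubgroup.closure ({1, I} : Set ℂ) ↔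
      m ∣ k * x ∧ m ∣ k * y := by
  rw [← div_mem_closure_one_I_iff hm, zsmul_eq_mul]
  push_cast
  ring_nf

theorem I_mul_sub_mul_div_mem_closure_one_I_iff (hm : m ≠ 0) (n : ℤ) :
    I * (((x : ℂ) + y * I) / m) - n * (((x : ℂ) + y * I) / m) ∈
        AddSubgroup.closure ({1, I} : Set ℂ) ↔
      m ∣ y + n * x ∧ m ∣ x - n * y := by
  rw [← dvd_neg (b := y + n * x), ← div_mem_closure_one_I_iff hm]
  convert Iff.rfl using 2
  push_cast
  ring_nf
  rw [I_sq]
  ring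

theorem eq_one_of_dvd_of_forall_not_dvd_mul (hm : 0 < m)
    (hmin : ∀ k, 0 < k → k < m → ¬ (m ∣ k * x ∧ m ∣ k * y)) {d : ℤ} (hd : 0 < d)
    (hdm : d ∣ m) (hdx : d ∣ x) (hdy : d ∣ y) : d = 1 := by
  obtain ⟨k, rfl⟩ := hdm
  obtain ⟨x', rfl⟩ := hdx
  obtain ⟨y', rfl⟩ := hdy
  have hk : 0 < k := pos_of_mul_pos_right hm hd.le
  by_contra hd1
  exact hmin k hk (by nlinarith [show 1 < d by omega]) ⟨⟨x', by ring⟩, ⟨y', by ring⟩⟩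

theorem gcd_eq_one_and_dvd_sq_add_one (hm : 0 < m)
    (hmin : ∀ k, 0 < k → k < m → ¬ (m ∣ k * x ∧ m ∣ k * y)) {n : ℤ}
    (hy : m ∣ y + n * x) (hx : m ∣ x - n * y) :
    Int.gcd y m = 1 ∧ m ∣ n ^ 2 + 1 := by
  have hgcd : Int.gcd y m = 1 := by
    have hdx : (Int.gcd y m : ℤ) ∣ x := by
      have := (Int.gcd_dvd_right y m |>.trans hx).add ((Int.gcd_dvd_left y m).mul_left n)
      rwa [sub_add_cancel] at this
    exact_mod_cast eq_one_of_dvd_of_forall_not_dvd_mul hm hmin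
      (mod_cast Int.gcd_pos_of_ne_zero_right y hm.ne') (Int.gcd_dvd_right y m) hdx (Int.gcd_dvd_left y m)
  refine ⟨hgcd, ?_⟩
  have hcop : IsCoprime m y := by rwa [Int.isCoprime_iff_gcd_eq_one, Int.gcd_comm]
  refine hcop.dvd_of_dvd_mul_left ?_
  have := hy.sub (hx.mul_left n)
  rwa [show y + n * x - n * (x - n * y) = y * (n ^ 2 + 1) by ring] at this

end

theorem stmt_15 (m x y n : ℤ) (hm : 2 < m) (a : ℂ)
    (ha : a = ((x : ℂ) + (y : ℂ) * I) / (m : ℂ))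
    (L : AddSubgroup ℂ) (hL : L = AddSubgroup.closure ({1, I} : Set ℂ))
    (hord : m • a ∈ L ∧ ∀ k : ℤ, 0 < k → k < m → k • a ∉ L)
    (hia : I * a - (n : ℂ) * a ∈ L) :
    Int.gcd y m = 1 ∧ m ∣ n ^ 2 + 1 := by
  subst hL ha
  have hm0 : m ≠ 0 := by omega
  rw [I_mul_sub_mul_div_mem_closure_one_I_iff hm0] at hia
  refine gcd_eq_one_and_dvd_sq_add_one (by omega) (fun k hk hkm => ?_) hia.1 hia.2
  rw [← zsmul_div_mem_closure_one_I_iff hm0]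
  exact hord.2 k hk hkm
end

section
/- In the elliptic curve ℂ/(ℤ + ℤ·ω) with ω² + ω + 1 = 0, suppose a is represented by (x + y·ω)/m ∈ ℂ with integers x, y, m > 3, that a has order exactly m, and that ω·a = n·a in ℂ/(ℤ + ℤ·ω) for an integer n. Then gcd(y, m) = 1 and m divides n² + n + 1. -/
/-!
Clearing the denominator `m`, a point `(x + y ω)/m` lies in the lattice `ℤ + ℤ ω` iff
`m ∣ x` and `m ∣ y`, because `1, ω` are `ℝ`-linearly independent. Since `ω² = -1 - ω`, the
relation `ω a = n a` becomes the congruences `y + n x ≡ 0` and `x ≡ (n + 1) y (mod m)`. The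
second shows that `d = gcd(y, m)` divides `x`, so `(m / d) • a` already lies in the lattice and
the order forces `d = 1`; eliminating `x` from the two congruences gives `m ∣ (n² + n + 1) y`,
and `y` is a unit modulo `m`.
-/

open Complex

namespace Complex

lemma mem_closure_one_pair_iff (ω z : ℂ) :
    z ∈ AddSubgroup.closure ({1, ω} : Set ℂ) ↔ ∃ p q : ℤ, z = p + q * ω := by
  simp only [AddSubgroup.mem_closure_pair, zsmul_eq_mul, mul_one, eq_comm]

lemma intCast_add_intCast_mul_inj {ω : ℂ} (hω : ω.im ≠ 0) {p q p' q' : ℤ}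
    (h : (p : ℂ) + q * ω = p' + q' * ω) : p = p' ∧ q = q' := by
  have him := congrArg Complex.im h
  have hre := congrArg Complex.re h
  simp only [add_im, add_re, intCast_im, intCast_re, mul_im, mul_re, zero_add, zero_mul,
    sub_zero, add_zero] at him hre
  have hq : q = q' := by exact_mod_cast mul_right_cancel₀ hω him
  subst hq
  exact ⟨by exact_mod_cast add_right_cancel hre, rfl⟩

lemma div_mem_closure_one_pair_iff {ω : ℂ} (hω : ω.im ≠ 0) {m : ℤ} (hm : m ≠ 0)
    (x y : ℤ) :
    ((x : ℂ) + y * ω) / m ∈ AddSubgroup.closure ({1, ω} : Set ℂ) ↔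
      m ∣ x ∧ m ∣ y := by
  have hm' : (m : ℂ) ≠ 0 := by exact_mod_cast hm
  rw [mem_closure_one_pair_iff]
  constructor
  · rintro ⟨p, q, h⟩
    rw [div_eq_iff hm'] at h
    obtain ⟨hx, hy⟩ := intCast_add_intCast_mul_inj hω (p := x) (q := y) (p' := m * p)
      (q' := m * q) (by push_cast; linear_combination h)
    exact ⟨⟨p, hx⟩, ⟨q, hy⟩⟩
  · rintro ⟨⟨p, rfl⟩, ⟨q, rfl⟩⟩
    exact ⟨p, q, by push_cast; field_simp⟩

lemma mul_sub_intCast_mul_div {ω : ℂ} (hω : ω ^ 2 = -1 - ω) (m x y n : ℤ) :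
    ω * ((x + y * ω) / m) - n * ((x + y * ω) / m) =
      (((-y - n * x : ℤ) : ℂ) + ((x - y - n * y : ℤ) : ℂ) * ω) / m := by
  push_cast
  linear_combination (y / m : ℂ) * hω

end Complex

namespace Int

lemma gcd_eq_one_of_forall_not_dvd_mul {m x y : ℤ} (hm : 0 < m) (hx : (gcd y m : ℤ) ∣ x)
    (hord : ∀ k : ℤ, 0 < k → k < m → ¬(m ∣ k * x ∧ m ∣ k * y)) : gcd y m = 1 := by
  obtain ⟨k, hk⟩ : (gcd y m : ℤ) ∣ m := gcd_dvd_right y m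
  have hd : 0 < (gcd y m : ℤ) := by exact_mod_cast gcd_pos_of_ne_zero_right y hm.ne'
  have hk0 : 0 < k := pos_of_mul_pos_right (hk ▸ hm) hd.le
  have hdvd : ∀ z : ℤ, (gcd y m : ℤ) ∣ z → m ∣ k * z := fun z hz => by
    rw [hk, mul_comm _ k]
    exact mul_dvd_mul_left k hz
  by_contra hd1
  have hkm : k < m := by
    rw [hk]
    have : (1 : ℤ) < gcd y m := by omega
    nlinarith
  exact hord k hk0 hkm ⟨hdvd x hx, hdvd y (gcd_dvd_left y m)⟩

end Int

theorem stmt_16 (ω : ℂ) (hω : ω = (-1 + Real.sqrt 3 * I) / 2)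
    (m x y n : ℤ) (hm : 3 < m) (a : ℂ)
    (ha : a = ((x : ℂ) + (y : ℂ) * ω) / (m : ℂ))
    (L : AddSubgroup ℂ) (hL : L = AddSubgroup.closure ({1, ω} : Set ℂ))
    (hord : m • a ∈ L ∧ ∀ k : ℤ, 0 < k → k < m → k • a ∉ L)
    (hωa : ω * a - (n : ℂ) * a ∈ L) :
    Int.gcd y m = 1 ∧ m ∣ n ^ 2 + n + 1 := by
  subst ha hL
  have hω2 : ω ^ 2 = -1 - ω := by
    have h3 : (Real.sqrt 3 : ℂ) ^ 2 = 3 := by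
      norm_cast
      exact Real.sq_sqrt (by norm_num)
    rw [hω]
    linear_combination (I ^ 2 * h3 + 3 * I_sq) / 4
  have hωim : ω.im ≠ 0 := by
    rw [hω]
    simp
  have hm0 : m ≠ 0 := by omega
  have hsmul (k : ℤ) :
      k • (((x : ℂ) + y * ω) / m) ∈ AddSubgroup.closure ({1, ω} : Set ℂ) ↔
        m ∣ k * x ∧ m ∣ k * y := by
    rw [← div_mem_closure_one_pair_iff hωim hm0]
    congr! 1
    push_cast
    rw [zsmul_eq_mul]
    ring
  obtain ⟨h₁, h₂⟩ := (div_mem_closure_one_pair_iff hωim hm0 _ _).1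
    (mul_sub_intCast_mul_div hω2 m x y n ▸ hωa)
  have hgcd : Int.gcd y m = 1 := by
    refine Int.gcd_eq_one_of_forall_not_dvd_mul (by omega) ?_
      fun k hk hkm => mt (hsmul k).2 (hord.2 k hk hkm)
    have hx : x = (x - y - n * y) + (1 + n) * y := by ring
    rw [hx]
    exact dvd_add ((Int.gcd_dvd_right y m).trans h₂)
      (dvd_mul_of_dvd_right (Int.gcd_dvd_left y m) _)
  have hdvd : m ∣ (n ^ 2 + n + 1) * y := by
    have h := dvd_sub (dvd_neg.2 h₁) (dvd_mul_of_dvd_right h₂ n)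
    rwa [show -(-y - n * x) - n * (x - y - n * y) = (n ^ 2 + n + 1) * y by ring] at h
  have hcop : IsCoprime m y := Int.isCoprime_iff_gcd_eq_one.2 (by rwa [Int.gcd_comm])
  exact ⟨hgcd, hcop.dvd_of_dvd_mul_right hdvd⟩
end
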